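/- Let A, B be strings of lengths m and n, σ a character, and let K'' be the all scores matrix of Aσ (σ appended to A) and B. Then for all 0 ≤ i ≤ j ≤ n: if k = prevmatch(j,σ,B) > −∞ then K''[i,j] = max( K[i,j], K[i,k−1] + 1 ), and if prevmatch(j,σ,B) = −∞ then K''[i,j] = K[i,j]. -/

import Mathlib

/-!
A common subsequence of `B[i..j]` and `Aσ` either does not use the final `σ` of `Aσ`, and is then
a common subsequence of `B[i..j]` and `A`, or ends by matching it with an occurrence of `σ` in
`B[i..j]`. Moving that match to the last occurrence `k = prevmatch(j,σ,B)` can only enlarge the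
prefix left for the rest, which is therefore a common subsequence of `B[i..k-1]` and `A`. If `σ`
does not occur in `B[i..j]` only the first case remains; this includes `k ≤ i`, where the
convention `K[i,k-1] = k-1-i < 0` makes the second term of the maximum harmless.
-/

variable {α : Type*}

/-- LCS of two lists: the maximum length of a common sublist. -/
noncomputable def LCS (X Y : List α) : ℕ :=
  sSup {k | ∃ Z : List α, Z.length = k ∧ Z.Sublist X ∧ Z.Sublist Y}

/-- `substr S i j` is S[i..j]: the characters of S at (1-based) positions i+1,…,j. -/
def substr (S : List α) (i j : ℕ) : List α := (S.take j).drop i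

/-- The density matrix D□ of a matrix D. -/
def density (D : ℕ → ℕ → ℤ) (i j : ℕ) : ℤ :=
  D i j + D (i - 1) (j - 1) - D (i - 1) j - D i (j - 1)

/-- The all scores matrix K of A and B: K[i,j] = LCS(B[i..j], A) if i ≤ j, else j - i. -/
noncomputable def Kmat (A B : List α) (i j : ℕ) : ℤ :=
  if i ≤ j then (LCS (substr B i j) A : ℤ) else (j : ℤ) - (i : ℤ)

/-- The all scores matrix P of A and B: P[i,j] = LCS(B[i..n], A[0..j]). -/
noncomputable def Pmat (A B : List α) (i j : ℕ) : ℤ :=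
  (LCS (substr B i B.length) (substr A 0 j) : ℤ)

/-- nextmatch(i,σ,B): minimum (1-based) position i' with i < i' ≤ |B| and B[i'] = σ; ⊤ (∞) if none. -/
noncomputable def nextmatch (i : ℕ) (σ : α) (B : List α) : ℕ∞ :=
  sInf {k : ℕ∞ | ∃ k' : ℕ, k = (k' : ℕ∞) ∧ i < k' ∧ k' ≤ B.length ∧ B[k' - 1]? = some σ}

/-- prevmatch(j,σ,B): maximum (1-based) position i' with 1 ≤ i' ≤ j and B[i'] = σ; ⊥ (−∞) if none. -/
noncomputable def prevmatch (j : ℕ) (σ : α) (B : List α) : WithBot ℕ :=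
  sSup {k : WithBot ℕ | ∃ k' : ℕ, k = (k' : WithBot ℕ) ∧ 1 ≤ k' ∧ k' ≤ j ∧ B[k' - 1]? = some σ}


section LCS

variable {X Y Z A T U : List α} {a : α}

lemma bddAbove_commonSublist_lengths (X Y : List α) :
    BddAbove {k | ∃ Z : List α, Z.length = k ∧ Z.Sublist X ∧ Z.Sublist Y} :=
  ⟨X.length, fun _ ⟨_, hk, hX, _⟩ => hk ▸ hX.length_le⟩

lemma length_le_LCS (hX : Z.Sublist X) (hY : Z.Sublist Y) : Z.length ≤ LCS X Y :=
  le_csSup (bddAbove_commonSublist_lengths X Y) ⟨Z, rfl, hX, hY⟩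

lemma exists_commonSublist_length_eq_LCS (X Y : List α) :
    ∃ Z : List α, Z.Sublist X ∧ Z.Sublist Y ∧ Z.length = LCS X Y := by
  obtain ⟨Z, hZ, hX, hY⟩ := Nat.sSup_mem (s := {k | ∃ Z : List α, Z.length = k ∧ Z.Sublist X ∧
    Z.Sublist Y}) ⟨0, [], rfl, List.nil_sublist X, List.nil_sublist Y⟩
    (bddAbove_commonSublist_lengths X Y)
  exact ⟨Z, hX, hY, hZ⟩

lemma LCS_le {k : ℕ} (h : ∀ Z : List α, Z.Sublist X → Z.Sublist Y → Z.length ≤ k) :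
    LCS X Y ≤ k := by
  obtain ⟨Z, hX, hY, hZ⟩ := exists_commonSublist_length_eq_LCS X Y
  exact hZ ▸ h Z hX hY

lemma LCS_mono_right (h : Y.Sublist U) : LCS X Y ≤ LCS X U :=
  LCS_le fun _ hX hY => length_le_LCS hX (hY.trans h)

lemma sublist_or_exists_of_sublist_append_singleton
    (h : Z.Sublist (A ++ [a])) : Z.Sublist A ∨ ∃ Z', Z = Z' ++ [a] ∧ Z'.Sublist A := by
  obtain ⟨Z', Z'', rfl, hA, hZ''⟩ := List.sublist_append_iff.1 h
  rcases List.sublist_singleton.1 hZ'' with rfl | rfl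
  · exact .inl (by simpa using hA)
  · exact .inr ⟨Z', rfl, hA⟩

lemma sublist_of_append_singleton_sublist_append_cons (h : (Z ++ [a]).Sublist (T ++ a :: U))
    (ha : a ∉ U) : Z.Sublist T := by
  obtain ⟨S₁, S₂, hS, hZ, haS₂⟩ := List.append_sublist_iff.1 h
  rcases List.append_eq_append_iff.1 hS.symm with ⟨T', rfl, -⟩ | ⟨T', rfl, hU⟩
  · exact hZ.trans (List.sublist_append_left S₁ T')
  · rcases T' with _ | ⟨b, T'⟩
    · simpa using hZ
    · obtain ⟨rfl, rfl⟩ := List.cons_eq_cons.1 hU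
      exact absurd (List.mem_append_right T' (List.singleton_sublist.1 haS₂)) ha

lemma LCS_append_singleton_of_notMem (ha : a ∉ X) : LCS X (A ++ [a]) = LCS X A := by
  refine le_antisymm (LCS_le fun Z hX hY => ?_)
    (LCS_mono_right (List.sublist_append_left A [a]))
  rcases sublist_or_exists_of_sublist_append_singleton hY with hA | ⟨Z', rfl, -⟩
  · exact length_le_LCS hX hA
  · exact absurd (hX.subset (by simp)) ha

lemma LCS_append_cons_append_singleton (ha : a ∉ U) :
    LCS (T ++ a :: U) (A ++ [a]) = max (LCS (T ++ a :: U) A) (LCS T A + 1) := by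
  refine le_antisymm (LCS_le fun Z hX hY => ?_) (max_le ?_ ?_)
  · rcases sublist_or_exists_of_sublist_append_singleton hY with hA | ⟨Z', rfl, hA⟩
    · exact le_max_of_le_left (length_le_LCS hX hA)
    · refine le_max_of_le_right ?_
      simpa using length_le_LCS (sublist_of_append_singleton_sublist_append_cons hX ha) hA
  · exact LCS_mono_right (List.sublist_append_left A [a])
  · obtain ⟨Z, hT, hA, hZ⟩ := exists_commonSublist_length_eq_LCS T A
    have hTaU : (Z ++ [a]).Sublist (T ++ a :: U) :=
      hT.append (List.singleton_sublist.2 List.mem_cons_self)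
    simpa [hZ] using length_le_LCS hTaU (hA.append (List.Sublist.refl [a]))

end LCS

lemma substr_append_substr (S : List α) {i l j : ℕ} (hil : i ≤ l) (hlj : l ≤ j) :
    substr S i l ++ substr S l j = substr S i j := by
  simp only [substr]
  conv_rhs => rw [← List.take_append_drop l (S.take j), List.take_take, min_eq_left hlj,
    List.drop_append]
  congr 1
  rcases le_or_gt l S.length with h | h
  · rw [List.length_take_of_le h, Nat.sub_eq_zero_of_le hil, List.drop_zero]
  · simp [List.drop_eq_nil_of_le, h.le, List.length_take]

lemma mem_substr_iff {S : List α} {i j : ℕ} {a : α} :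
    a ∈ substr S i j ↔ ∃ k, i < k ∧ k ≤ j ∧ S[k - 1]? = some a := by
  simp only [substr, List.mem_iff_getElem?, List.getElem?_drop, List.getElem?_take]
  constructor
  · rintro ⟨t, ht⟩
    split_ifs at ht with h
    exact ⟨i + t + 1, by omega, by omega, by simpa using ht⟩
  · rintro ⟨k, hik, hkj, hk⟩
    exact ⟨k - 1 - i, by rw [if_pos (by omega)]; convert hk using 2; omega⟩

lemma substr_eq_append_cons {S : List α} {i j k : ℕ} {a : α} (hik : i < k) (hkj : k ≤ j)
    (hk : S[k - 1]? = some a) : substr S i j = substr S i (k - 1) ++ a :: substr S k j := by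
  obtain ⟨p, rfl⟩ := Nat.exists_eq_add_of_lt hik
  have hp : S[i + p]? = some a := hk
  have hpos : i + p < S.length := (List.getElem?_eq_some_iff.1 hp).1
  have hsingle : substr S (i + p) (i + p + 1) = [a] := by
    simp [substr, List.take_add_one, hp, List.length_take, hpos.le]
  rw [← substr_append_substr S (by omega : i ≤ i + p) (by omega : i + p ≤ j),
    ← substr_append_substr S (by omega : i + p ≤ i + p + 1) hkj, hsingle]
  rfl

section prevmatch

variable {i j k : ℕ} {σ : α} {B : List α}

lemma coe_le_prevmatch (hk : 1 ≤ k) (hkj : k ≤ j) (hσ : B[k - 1]? = some σ) :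
    (k : WithBot ℕ) ≤ prevmatch j σ B :=
  le_csSup ⟨j, fun _ ⟨_, hx, _, hxj, _⟩ => hx ▸ WithBot.coe_le_coe.2 hxj⟩ ⟨k, rfl, hk, hkj, hσ⟩

lemma notMem_substr_of_prevmatch_eq_bot (h : prevmatch j σ B = ⊥) (i : ℕ) :
    σ ∉ substr B i j := by
  intro hσ
  obtain ⟨k, hik, hkj, hk⟩ := mem_substr_iff.1 hσ
  simpa [h] using coe_le_prevmatch (by omega) hkj hk

lemma prevmatch_eq_coe (h : prevmatch j σ B = k) :
    1 ≤ k ∧ k ≤ j ∧ B[k - 1]? = some σ ∧ σ ∉ substr B k j := by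
  set M := {x : WithBot ℕ | ∃ k' : ℕ, x = k' ∧ 1 ≤ k' ∧ k' ≤ j ∧ B[k' - 1]? = some σ}
  have hM : M.Nonempty := by
    by_contra hM
    simp [prevmatch, M, Set.not_nonempty_iff_eq_empty.1 hM] at h
  have hfin : M.Finite :=
    (Set.finite_Icc ⊥ (j : WithBot ℕ)).subset fun _ ⟨_, hx, _, hxj, _⟩ =>
      ⟨bot_le, hx ▸ WithBot.coe_le_coe.2 hxj⟩
  obtain ⟨k', hk', hk'1, hk'j, hσ⟩ := hM.csSup_mem hfin
  obtain rfl : k = k' := WithBot.coe_injective (h.symm.trans hk')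
  refine ⟨hk'1, hk'j, hσ, fun hσ' => ?_⟩
  obtain ⟨l, hkl, hlj, hl⟩ := mem_substr_iff.1 hσ'
  have hlk : (l : WithBot ℕ) ≤ k := h ▸ coe_le_prevmatch (by omega) hlj hl
  exact (WithBot.coe_lt_coe.2 hkl).not_ge hlk

end prevmatch

lemma Kmat_of_le {A B : List α} {i j : ℕ} (h : i ≤ j) : Kmat A B i j = LCS (substr B i j) A :=
  if_pos h

lemma Kmat_of_lt {A B : List α} {i j : ℕ} (h : j < i) : Kmat A B i j = (j : ℤ) - i :=
  if_neg h.not_ge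

theorem stmt_10_general {α : Type*} (A B : List α) (n : ℕ) (σ : α) :
    ∀ i j : ℕ, i ≤ j → j ≤ n →
      (∀ k : ℕ, prevmatch j σ B = (k : WithBot ℕ) →
        Kmat (A ++ [σ]) B i j = max (Kmat A B i j) (Kmat A B i (k - 1) + 1)) ∧
      (prevmatch j σ B = ⊥ → Kmat (A ++ [σ]) B i j = Kmat A B i j) := by
  intro i j hij _
  refine ⟨fun k hk => ?_, fun hbot => ?_⟩
  · obtain ⟨hk, hkj, hσ, hσ_after⟩ := prevmatch_eq_coe hk
    rcases le_or_gt k i with hki | hik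
    · have hσ_notMem : σ ∉ substr B i j := fun h =>
        hσ_after (substr_append_substr B hki hij ▸ List.mem_append_right _ h)
      rw [Kmat_of_le hij, Kmat_of_le hij, Kmat_of_lt (by omega : k - 1 < i),
        LCS_append_singleton_of_notMem hσ_notMem]
      exact (max_eq_left (by omega)).symm
    · rw [Kmat_of_le hij, Kmat_of_le hij, Kmat_of_le (by omega : i ≤ k - 1),
        substr_eq_append_cons hik hkj hσ, LCS_append_cons_append_singleton hσ_after]
      norm_cast
  · rw [Kmat_of_le hij, Kmat_of_le hij,
      LCS_append_singleton_of_notMem (notMem_substr_of_prevmatch_eq_bot hbot i)]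

/-- effect of appending σ to A on the all scores matrix K. -/
theorem stmt_10 {α : Type*} (A B : List α) (m n : ℕ)
    (hA : A.length = m) (hB : B.length = n) (σ : α) :
    ∀ i j : ℕ, i ≤ j → j ≤ n →
      (∀ k : ℕ, prevmatch j σ B = (k : WithBot ℕ) →
        Kmat (A ++ [σ]) B i j = max (Kmat A B i j) (Kmat A B i (k - 1) + 1)) ∧
      (prevmatch j σ B = ⊥ → Kmat (A ++ [σ]) B i j = Kmat A B i j) :=
  stmt_10_general A B n σ
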